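/- Let ι be a nonempty finite index set, f : ι → ℝ, λ > 0, A a finite set of pairs (i,j) ∈ ι × ι with nonnegative weights w : ι × ι → ℝ (w ≥ 0), and ψ : ℝ → ℝ a function that is even and nondecreasing on [0,∞). Define E(u) = Σ_{(i,j)∈A} w(i,j)·ψ(u i − u j) + (λ/2)·Σ_{i∈ι} (u i − f i)². If u : ι → ℝ is a global minimizer of E, then for every i ∈ ι, (min over j of f j) ≤ u i ≤ (max over j of f j). -/
import Mathlib

theorem stmt_6 {ι : Type*} [Fintype ι] [Nonempty ι]
    (f : ι → ℝ) (lam : ℝ) (hlam : 0 < lam)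
    (A : Finset (ι × ι)) (w : ι × ι → ℝ) (hw : ∀ p, 0 ≤ w p)
    (ψ : ℝ → ℝ) (hψeven : ∀ s, ψ (-s) = ψ s)
    (hψmono : ∀ s t : ℝ, 0 ≤ s → s ≤ t → ψ s ≤ ψ t)
    (E : (ι → ℝ) → ℝ)
    (hE : ∀ u : ι → ℝ, E u =
      (∑ p ∈ A, w p * ψ (u p.1 - u p.2)) + (lam / 2) * ∑ i, (u i - f i) ^ 2)
    (u : ι → ℝ) (hmin : ∀ v : ι → ℝ, E u ≤ E v) :
    ∀ i : ι,
      Finset.univ.inf' Finset.univ_nonempty f ≤ u i ∧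
      u i ≤ Finset.univ.sup' Finset.univ_nonempty f := by
  set m := Finset.univ.inf' Finset.univ_nonempty f with hm
  set M := Finset.univ.sup' Finset.univ_nonempty f with hM
  have hfm : ∀ i, m ≤ f i := fun i => Finset.inf'_le _ (Finset.mem_univ i)
  have hfM : ∀ i, f i ≤ M := fun i => Finset.le_sup' _ (Finset.mem_univ i)
  have hmM : m ≤ M := le_trans (hfm (Classical.arbitrary ι)) (hfM _)
  set v : ι → ℝ := fun i => max m (min (u i) M) with hv
  -- ψ evenness: ψ x = ψ |x|
  have hψabs : ∀ x : ℝ, ψ x = ψ |x| := by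
    intro x
    rcases le_or_gt 0 x with h | h
    · rw [abs_of_nonneg h]
    · rw [abs_of_neg h, hψeven]
  -- Lipschitz of clamp
  have hlip : ∀ a b : ℝ, |max m (min a M) - max m (min b M)| ≤ |a - b| := by
    intro a b
    rw [max_comm m (min a M), max_comm m (min b M)]
    refine (abs_max_sub_max_le_abs (min a M) (min b M) m).trans ?_
    have := abs_min_sub_min_le_max a M b M
    simpa using this
  -- regularizer termwise bound
  have hreg : ∀ p ∈ A, w p * ψ (v p.1 - v p.2) ≤ w p * ψ (u p.1 - u p.2) := by
    intro p _
    refine mul_le_mul_of_nonneg_left ?_ (hw p)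
    rw [hψabs (v p.1 - v p.2), hψabs (u p.1 - u p.2)]
    exact hψmono _ _ (abs_nonneg _) (hlip _ _)
  have hregsum : (∑ p ∈ A, w p * ψ (v p.1 - v p.2)) ≤ ∑ p ∈ A, w p * ψ (u p.1 - u p.2) :=
    Finset.sum_le_sum hreg
  -- fidelity termwise bound
  have hfid : ∀ i, (v i - f i) ^ 2 ≤ (u i - f i) ^ 2 := by
    intro i
    have h := hlip (u i) (f i)
    have hvf : max m (min (f i) M) = f i := by
      rw [min_eq_left (hfM i), max_eq_right (hfm i)]
    rw [hvf] at h
    calc (v i - f i) ^ 2 = |v i - f i| ^ 2 := (sq_abs _).symm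
      _ ≤ |u i - f i| ^ 2 := by
          exact pow_le_pow_left₀ (abs_nonneg _) h 2
      _ = (u i - f i) ^ 2 := sq_abs _
  intro i
  by_contra hcon
  push_neg at hcon
  -- strict fidelity decrease at i
  have hstrict : (v i - f i) ^ 2 < (u i - f i) ^ 2 := by
    rcases lt_or_ge (u i) m with h | h
    · have hvi : v i = m := by
        simp only [hv]
        rw [min_eq_left (h.le.trans hmM), max_eq_left h.le]
      rw [hvi]
      have h1 : f i - m ≤ f i - u i := by linarith
      have h2 : 0 ≤ f i - m := by linarith [hfm i]
      calc (m - f i) ^ 2 = (f i - m) ^ 2 := by ring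
        _ < (f i - u i) ^ 2 := by nlinarith
        _ = (u i - f i) ^ 2 := by ring
    · have hMu : M < u i := hcon h
      have hvi : v i = M := by
        simp only [hv]
        rw [min_eq_right hMu.le, max_eq_right hmM]
      rw [hvi]
      have h2 : 0 ≤ M - f i := by linarith [hfM i]
      nlinarith
  have hfidsum : (∑ j, (v j - f j) ^ 2) < ∑ j, (u j - f j) ^ 2 :=
    Finset.sum_lt_sum (fun j _ => hfid j) ⟨i, Finset.mem_univ i, hstrict⟩
  have : E v < E u := by
    rw [hE u, hE v]
    have := mul_lt_mul_of_pos_left hfidsum (by positivity : (0:ℝ) < lam / 2)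
    linarith
  exact absurd (hmin v) (not_le.mpr this)
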